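/- There are no nonzero sheaf morphisms from a right half-open interval sheaf to an open or left half-open interval sheaf, nor from a left half-open interval sheaf to an open or right half-open interval sheaf. Precisely: (i) for a ∈ ℝ and b ∈ ℝ ∪ {+∞} with a < b, Hom(k_{[a,b)}, k_{(c,d)}) = 0 for all c ∈ ℝ ∪ {−∞}, d ∈ ℝ ∪ {+∞} with c < d, and Hom(k_{[a,b)}, k_{(c,d]}) = 0 for all c ∈ ℝ ∪ {−∞}, d ∈ ℝ with c < d; (ii) for a ∈ ℝ ∪ {−∞} and b ∈ ℝ with a < b, Hom(k_{(a,b]}, k_{(c,d)}) = 0 for all c ∈ ℝ ∪ {−∞}, d ∈ ℝ ∪ {+∞} with c < d, and Hom(k_{(a,b]}, k_{[c,d)}) = 0 for all c ∈ ℝ, d ∈ ℝ ∪ {+∞} with c < d. -/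

import Mathlib

open CategoryTheory TopologicalSpace Set Topology

noncomputable section

variable (k : Type) [Field k]

/-- The support of the function `s : V ∩ I → k` is closed in `V`. -/
def SuppClosedIn (I V : Set ℝ) (s : ↥(V ∩ I) → k) : Prop :=
  ∀ x ∈ V, x ∈ closure {y : ℝ | ∃ h : y ∈ V ∩ I, s ⟨y, h⟩ ≠ 0} →
    ∃ h : x ∈ V ∩ I, s ⟨x, h⟩ ≠ 0

lemma zero_locConst (I V : Set ℝ) :
    IsLocallyConstant (0 : ↥(V ∩ I) → k) ∧ SuppClosedIn k I V 0 := by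
  constructor
  · exact IsLocallyConstant.const 0
  · intro x _ hx
    exfalso
    have h0 : {y : ℝ | ∃ h : y ∈ V ∩ I, (0 : ↥(V ∩ I) → k) ⟨y, h⟩ ≠ 0} = ∅ := by
      ext y; simp
    rw [h0, closure_empty] at hx
    exact hx

/-- The sections over `V` of the sheaf `k_I`: locally constant functions on `V ∩ I`
whose support is closed in `V`. -/
def secSub (I V : Set ℝ) : Submodule k (↥(V ∩ I) → k) where
  carrier := {s | IsLocallyConstant s ∧ SuppClosedIn k I V s}
  zero_mem' := zero_locConst k I V
  add_mem' := by
    rintro s t ⟨hslc, hscl⟩ ⟨htlc, htcl⟩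
    have hlc : IsLocallyConstant (s + t) := hslc.comp₂ htlc (· + ·)
    refine ⟨hlc, ?_⟩
    intro x hxV hxcl
    have hsub : {y : ℝ | ∃ h : y ∈ V ∩ I, (s + t) ⟨y, h⟩ ≠ 0}
        ⊆ {y : ℝ | ∃ h : y ∈ V ∩ I, s ⟨y, h⟩ ≠ 0}
          ∪ {y : ℝ | ∃ h : y ∈ V ∩ I, t ⟨y, h⟩ ≠ 0} := by
      rintro y ⟨h, hy⟩
      by_cases hsy : s ⟨y, h⟩ = 0
      · refine Or.inr ⟨h, fun h0 => hy ?_⟩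
        show s ⟨y, h⟩ + t ⟨y, h⟩ = 0
        rw [hsy, h0, add_zero]
      · exact Or.inl ⟨h, hsy⟩
    have hxVI : x ∈ V ∩ I := by
      have hcl2 := closure_mono hsub hxcl
      rw [closure_union] at hcl2
      rcases hcl2 with h | h
      · exact (hscl x hxV h).choose
      · exact (htcl x hxV h).choose
    refine ⟨hxVI, ?_⟩
    have hA : IsClosed {y : ↥(V ∩ I) | (s + t) y ≠ 0} := by
      have h1 : IsOpen ((s + t) ⁻¹' {0}) := hlc {0}
      have h2 := h1.isClosed_compl
      have h3 : ((s + t) ⁻¹' {0})ᶜ = {y : ↥(V ∩ I) | (s + t) y ≠ 0} := by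
        ext y; simp
      exact h3 ▸ h2
    have hmem : (⟨x, hxVI⟩ : ↥(V ∩ I)) ∈ closure {y : ↥(V ∩ I) | (s + t) y ≠ 0} := by
      rw [closure_subtype]
      have himg : Subtype.val '' {y : ↥(V ∩ I) | (s + t) y ≠ 0}
          = {y : ℝ | ∃ h : y ∈ V ∩ I, (s + t) ⟨y, h⟩ ≠ 0} := by
        ext y
        constructor
        · rintro ⟨z, hz, rfl⟩; exact ⟨z.2, hz⟩
        · rintro ⟨h, hy⟩; exact ⟨⟨y, h⟩, hy, rfl⟩
      rw [himg]
      exact hxcl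
    have := hA.closure_eq ▸ hmem
    exact this
  smul_mem' := by
    intro c s hs
    rcases hs with ⟨hlc, hcl⟩
    by_cases hc : c = 0
    · subst hc
      rw [zero_smul]
      exact zero_locConst k I V
    · constructor
      · exact hlc.comp (fun a => c • a)
      · intro x hxV hxcl
        have hset : {y : ℝ | ∃ h : y ∈ V ∩ I, (c • s) ⟨y, h⟩ ≠ 0}
            = {y : ℝ | ∃ h : y ∈ V ∩ I, s ⟨y, h⟩ ≠ 0} := by
          ext y
          constructor
          · rintro ⟨h, hy⟩
            refine ⟨h, fun h0 => hy ?_⟩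
            show c • s ⟨y, h⟩ = 0
            rw [h0, smul_zero]
          · rintro ⟨h, hy⟩
            exact ⟨h, by simpa [smul_eq_zero, hc] using hy⟩
        rw [hset] at hxcl
        obtain ⟨h, hy⟩ := hcl x hxV hxcl
        exact ⟨h, by simpa [smul_eq_zero, hc] using hy⟩
/-- Restriction of sections. -/
def resFun (I : Set ℝ) {V W : Set ℝ} (h : W ⊆ V) (s : ↥(V ∩ I) → k) : ↥(W ∩ I) → k :=
  fun y => s ⟨y.1, ⟨h y.2.1, y.2.2⟩⟩

lemma resFun_mem (I : Set ℝ) {V W : Set ℝ} (h : W ⊆ V) (s : ↥(V ∩ I) → k)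
    (hs : s ∈ secSub k I V) : resFun k I h s ∈ secSub k I W := by
  obtain ⟨hlc, hcl⟩ := hs
  constructor
  · exact hlc.comp_continuous (Continuous.subtype_mk continuous_subtype_val _)
  · intro x hxW hxcl
    have hsub : {y : ℝ | ∃ h' : y ∈ W ∩ I, resFun k I h s ⟨y, h'⟩ ≠ 0}
        ⊆ {y : ℝ | ∃ h' : y ∈ V ∩ I, s ⟨y, h'⟩ ≠ 0} := by
      rintro y ⟨h', hy⟩
      exact ⟨⟨h h'.1, h'.2⟩, hy⟩
    obtain ⟨hxVI, hne⟩ := hcl x (h hxW) (closure_mono hsub hxcl)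
    exact ⟨⟨hxW, hxVI.2⟩, hne⟩

/-- Restriction as a linear map. -/
def resLM (I : Set ℝ) {V W : Set ℝ} (h : W ⊆ V) : secSub k I V →ₗ[k] secSub k I W where
  toFun s := ⟨resFun k I h s.1, resFun_mem k I h s.1 s.2⟩
  map_add' s t := rfl
  map_smul' c s := rfl

/-- The presheaf `k_I` on `ℝ`. -/
def intervalPresheaf (I : Set ℝ) : TopCat.Presheaf (ModuleCat.{0} k) (TopCat.of ℝ) where
  obj V := ModuleCat.of k (secSub k I V.unop.1)
  map {V W} f := ModuleCat.ofHom (resLM k I (leOfHom f.unop))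
  map_id V := rfl
  map_comp f g := rfl
theorem intervalPresheaf_isSheaf (I : Set ℝ) : (intervalPresheaf k I).IsSheaf := by
  classical
  rw [TopCat.Presheaf.isSheaf_iff_isSheafUniqueGluing]
  intro ι U sf hcomp
  change (i : ι) → ↥(secSub k I (U i).1) at sf
  -- pointwise compatibility
  have key : ∀ (i j : ι) (x : ℝ) (hxi : x ∈ (U i).1 ∩ I) (hxj : x ∈ (U j).1 ∩ I),
      (sf i).1 ⟨x, hxi⟩ = (sf j).1 ⟨x, hxj⟩ := by
    intro i j x hxi hxj
    have h := hcomp i j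
    have hmem : x ∈ (U i ⊓ U j).1 ∩ I := ⟨⟨hxi.1, hxj.1⟩, hxi.2⟩
    have h2 := congrFun (congrArg Subtype.val h) ⟨x, hmem⟩
    exact h2
  have hmemS : ∀ x : ↥((iSup U : Opens (TopCat.of ℝ)).1 ∩ I), ∃ i, x.1 ∈ U i := by
    intro x
    exact Opens.mem_iSup.mp x.2.1
  set idx : ↥((iSup U : Opens (TopCat.of ℝ)).1 ∩ I) → ι := fun x => (hmemS x).choose with hidxdef
  have hidx : ∀ x, x.1 ∈ U (idx x) := fun x => (hmemS x).choose_spec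
  set s₀ : ↥((iSup U : Opens (TopCat.of ℝ)).1 ∩ I) → k :=
    fun x => (sf (idx x)).1 ⟨x.1, ⟨hidx x, x.2.2⟩⟩ with hs₀def
  have hs₀ : ∀ (x : ↥((iSup U : Opens (TopCat.of ℝ)).1 ∩ I)) (i : ι) (hx : x.1 ∈ U i),
      s₀ x = (sf i).1 ⟨x.1, ⟨hx, x.2.2⟩⟩ :=
    fun x i hx => key (idx x) i x.1 ⟨hidx x, x.2.2⟩ ⟨hx, x.2.2⟩
  have hlc : IsLocallyConstant s₀ := by
    rw [IsLocallyConstant.iff_exists_open]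
    intro x
    obtain ⟨i, hi⟩ := hmemS x
    have hlci : IsLocallyConstant ((sf i).1 : ↥((U i).1 ∩ I) → k) := (sf i).2.1
    obtain ⟨W, hWopen, hpW, hWconst⟩ := hlci.exists_open (⟨x.1, ⟨hi, x.2.2⟩⟩ : ↥((U i).1 ∩ I))
    obtain ⟨O, hOopen, hWO⟩ := isOpen_induced_iff.mp hWopen
    subst hWO
    refine ⟨Subtype.val ⁻¹' (O ∩ (U i).1), (hOopen.inter (U i).2).preimage continuous_subtype_val,
      ⟨hpW, hi⟩, ?_⟩
    intro y hy
    have hyi : y.1 ∈ U i := hy.2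
    rw [hs₀ y i hyi, hs₀ x i hi]
    exact hWconst ⟨y.1, ⟨hyi, y.2.2⟩⟩ hy.1
  have hscl : SuppClosedIn k I (iSup U : Opens (TopCat.of ℝ)).1 s₀ := by
    intro x hxS hxcl
    obtain ⟨i, hi⟩ := Opens.mem_iSup.mp hxS
    have h1 : x ∈ closure ({y : ℝ | ∃ h : y ∈ (iSup U : Opens (TopCat.of ℝ)).1 ∩ I, s₀ ⟨y, h⟩ ≠ 0}
        ∩ (U i).1) := by
      rw [mem_closure_iff] at hxcl ⊢
      intro O hO hxO
      obtain ⟨z, hz⟩ := hxcl (O ∩ (U i).1) (hO.inter (U i).2) ⟨hxO, hi⟩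
      exact ⟨z, hz.1.1, hz.2, hz.1.2⟩
    have hsub : {y : ℝ | ∃ h : y ∈ (iSup U : Opens (TopCat.of ℝ)).1 ∩ I, s₀ ⟨y, h⟩ ≠ 0}
        ∩ (U i).1 ⊆ {y : ℝ | ∃ h : y ∈ (U i).1 ∩ I, (sf i).1 ⟨y, h⟩ ≠ 0} := by
      rintro y ⟨⟨hy, hne⟩, hyi⟩
      refine ⟨⟨hyi, hy.2⟩, ?_⟩
      rw [← hs₀ ⟨y, hy⟩ i hyi]
      exact hne
    obtain ⟨hyUI, hne⟩ := (sf i).2.2 x hi (closure_mono hsub h1)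
    refine ⟨⟨hxS, hyUI.2⟩, ?_⟩
    rw [hs₀ ⟨x, ⟨hxS, hyUI.2⟩⟩ i hyUI.1]
    exact hne
  refine ⟨(⟨s₀, hlc, hscl⟩ : secSub k I (iSup U : Opens (TopCat.of ℝ)).1), ?_, ?_⟩
  · intro i
    apply Subtype.ext
    funext y
    exact hs₀ ⟨y.1, ⟨leOfHom (Opens.leSupr U i) y.2.1, y.2.2⟩⟩ i y.2.1
  · intro t ht
    apply Subtype.ext
    funext x
    have h := ht (idx x)
    have h2 := congrFun (congrArg Subtype.val h) ⟨x.1, ⟨hidx x, x.2.2⟩⟩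
    exact h2

/-- The sheaf `k_I` on `ℝ` for an interval `I`: locally constant functions on `V ∩ I`
whose support is closed in `V`. -/
def intervalSheaf (I : Set ℝ) :
    Sheaf (Opens.grothendieckTopology (TopCat.of ℝ)) (ModuleCat.{0} k) :=
  ⟨intervalPresheaf k I, intervalPresheaf_isSheaf k I⟩
/-- The category of sheaves of `k`-vector spaces on `ℝ`. -/
abbrev RealSheafCat := Sheaf (Opens.grothendieckTopology (TopCat.of ℝ)) (ModuleCat.{0} k)

instance sheafHomSMul (F G : RealSheafCat k) : SMul k (F ⟶ G) :=
  ⟨fun c f => ⟨c • f.hom⟩⟩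

instance sheafHomModule (F G : RealSheafCat k) : Module k (F ⟶ G) :=
  Function.Injective.module k
    { toFun := fun f : F ⟶ G => f.hom
      map_zero' := rfl
      map_add' := fun _ _ => rfl }
    (fun _ _ h => Sheaf.hom_ext h) (fun _ _ => rfl)

instance : HasExt.{1} (RealSheafCat k) := by
  letI := HasDerivedCategory.standard (RealSheafCat k)
  exact hasExt_of_hasDerivedCategory _

/-- The interval `(a, b)` with possibly infinite endpoints. -/
def Ioo' (a b : EReal) : Set ℝ := {x : ℝ | a < (x : EReal) ∧ (x : EReal) < b}

/-- The interval `[a, b)` with a possibly infinite right endpoint. -/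
def Ico' (a : ℝ) (b : EReal) : Set ℝ := {x : ℝ | a ≤ x ∧ (x : EReal) < b}

/-- The interval `(a, b]` with a possibly infinite left endpoint. -/
def Ioc' (a : EReal) (b : ℝ) : Set ℝ := {x : ℝ | a < (x : EReal) ∧ x ≤ b}

/-- Identification of sheaves on the topological space `ℝ` with objects of `RealSheafCat`. -/
def toRS (F : TopCat.Sheaf (ModuleCat.{0} k) (TopCat.of ℝ)) : RealSheafCat k := F

/-! A sheaf morphism `f : k_I ⟶ k_J` shrinks supports of sections, so it can only be nonzero at
points of `I ∩ J`; near such a point every section of `k_I` is a constant multiple of the unit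
section on an open interval `W ⊇ I` in which `I` is closed (`W = (-∞, b)` for `I = [a, b)`).
The image of the unit section is locally constant on the interval `W ∩ J`, hence constant, and
if it were nonzero its support `W ∩ J` would be closed in `W` and contained in `I`. This fails
when `J` is open on the left at `c`: a real `c` lies in `W` and in the closure of `W ∩ J` but
not in `J`, while for `c = -∞` the set `J` contains points to the left of `I`. The case
`I = (a, b]` is the mirror image. -/

open Opposite

section
variable {k} {I J : Set ℝ}

def sectionSupport {V : Set ℝ} (s : ↥(V ∩ I) → k) : Set ℝ :=
  {y : ℝ | ∃ h : y ∈ V ∩ I, s ⟨y, h⟩ ≠ 0}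

lemma sectionSupport_subset {V : Set ℝ} (s : ↥(V ∩ I) → k) : sectionSupport s ⊆ V ∩ I :=
  fun _ ⟨h, _⟩ => h

lemma IsLocallyConstant.apply_eq_of_isPreconnected_subtype {X Y : Type*} [TopologicalSpace X]
    {A : Set X} (hA : IsPreconnected A) {g : A → Y} (hg : IsLocallyConstant g) (x y : A) :
    g x = g y :=
  haveI := isPreconnected_iff_preconnectedSpace.mp hA
  hg.apply_eq_of_preconnectedSpace x y

lemma ordConnected_Ico' (a : ℝ) (b : EReal) : (Ico' a b).OrdConnected :=
  ordConnected_Ici.inter (ordConnected_Iio.preimage_mono EReal.coe_strictMono.monotone)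

lemma ordConnected_Ioc' (a : EReal) (b : ℝ) : (Ioc' a b).OrdConnected :=
  (ordConnected_Ioi.preimage_mono EReal.coe_strictMono.monotone).inter ordConnected_Iic

lemma ordConnected_Ioo' (a b : EReal) : (Ioo' a b).OrdConnected :=
  ordConnected_Ioo.preimage_mono EReal.coe_strictMono.monotone

lemma one_mem_secSub {W : Set ℝ} (h : W ∩ closure I ⊆ I) :
    (fun _ => (1 : k)) ∈ secSub k I W := by
  refine ⟨IsLocallyConstant.const 1, fun x hxW hxcl => ⟨⟨hxW, h ⟨hxW, ?_⟩⟩, one_ne_zero⟩⟩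
  exact closure_mono (fun y (hy : y ∈ sectionSupport (fun _ => (1 : k))) =>
    (sectionSupport_subset _ hy).2) hxcl

variable (k) in
def oneSection (W : Opens (TopCat.of ℝ)) (h : W.1 ∩ closure I ⊆ I) : secSub k I W.1 :=
  ⟨fun _ => 1, one_mem_secSub h⟩

namespace intervalSheaf

lemma app_res_apply (f : intervalSheaf k I ⟶ intervalSheaf k J) {V W : Opens (TopCat.of ℝ)}
    (h : W ≤ V) (s : secSub k I V.1) (y : ↥(W.1 ∩ J)) :
    (f.hom.app (op W) ((intervalPresheaf k I).map (homOfLE h).op s)).1 y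
      = (f.hom.app (op V) s).1 ⟨y.1, h y.2.1, y.2.2⟩ :=
  congrFun (congrArg Subtype.val
    (ConcreteCategory.congr_hom (f.hom.naturality (homOfLE h).op) s)) y

lemma hom_eq_zero_of_app_apply_eq_zero (f : intervalSheaf k I ⟶ intervalSheaf k J)
    (h : ∀ (V : Opens (TopCat.of ℝ)) (s : secSub k I V.1) (y : ↥(V.1 ∩ J)),
      (f.hom.app (op V) s).1 y = 0) : f = 0 := by
  apply Sheaf.hom_ext
  ext V s
  exact Subtype.ext (funext (h V.unop s))

lemma sectionSupport_app_subset (f : intervalSheaf k I ⟶ intervalSheaf k J)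
    (V : Opens (TopCat.of ℝ)) (s : secSub k I V.1) :
    sectionSupport (f.hom.app (op V) s).1 ⊆ sectionSupport s.1 := by
  rintro p ⟨hp, hfp⟩
  by_contra hps
  have hpcl : p ∉ closure (sectionSupport s.1) := fun hcl => hps (s.2.2 p hp.1 hcl)
  let U : Opens (TopCat.of ℝ) :=
    ⟨V.1 ∩ (closure (sectionSupport s.1))ᶜ, V.2.inter isClosed_closure.isOpen_compl⟩
  have hUV : U ≤ V := fun x hx => hx.1
  have hres : (intervalPresheaf k I).map (homOfLE hUV).op s = 0 := by
    apply Subtype.ext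
    funext y
    by_contra hy
    exact y.2.1.2 (subset_closure ⟨⟨y.2.1.1, y.2.2⟩, hy⟩)
  apply hfp
  rw [← app_res_apply f hUV s ⟨p, ⟨hp.1, hpcl⟩, hp.2⟩, hres]
  erw [map_zero]
  rfl

lemma app_apply_eq_smul_app_oneSection (hI : I.OrdConnected)
    (f : intervalSheaf k I ⟶ intervalSheaf k J) {V W : Opens (TopCat.of ℝ)}
    (hIW : W.1 ∩ closure I ⊆ I) (s : secSub k I V.1) {p : ℝ} (hpV : p ∈ V.1) (hpW : p ∈ W.1)
    (hpI : p ∈ I) (hpJ : p ∈ J) :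
    (f.hom.app (op V) s).1 ⟨p, hpV, hpJ⟩
      = s.1 ⟨p, hpV, hpI⟩ • (f.hom.app (op W) (oneSection k W hIW)).1 ⟨p, hpW, hpJ⟩ := by
  obtain ⟨ε, hε, hball⟩ := Metric.isOpen_iff.mp (V.2.inter W.2) p ⟨hpV, hpW⟩
  rw [Real.ball_eq_Ioo] at hball
  let U : Opens (TopCat.of ℝ) := ⟨Ioo (p - ε) (p + ε), isOpen_Ioo⟩
  have hUV : U ≤ V := fun x hx => (hball hx).1
  have hUW : U ≤ W := fun x hx => (hball hx).2
  have hpU : p ∈ U.1 := ⟨by linarith, by linarith⟩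
  have hs : (intervalPresheaf k I).map (homOfLE hUV).op s
      = s.1 ⟨p, hpV, hpI⟩ • (intervalPresheaf k I).map (homOfLE hUW).op (oneSection k W hIW) := by
    apply Subtype.ext
    funext y
    exact (((intervalPresheaf k I).map (homOfLE hUV).op s).2.1.apply_eq_of_isPreconnected_subtype
      (ordConnected_Ioo.inter hI).isPreconnected y ⟨p, hpU, hpI⟩).trans (mul_one _).symm
  rw [← app_res_apply f hUV s ⟨p, hpU, hpJ⟩, hs]
  erw [map_smul]
  rw [← app_res_apply f hUW _ ⟨p, hpU, hpJ⟩]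
  rfl

lemma app_oneSection_eq_zero (f : intervalSheaf k I ⟶ intervalSheaf k J) (W : Opens (TopCat.of ℝ))
    (hIW : W.1 ∩ closure I ⊆ I) (hWJ : IsPreconnected (W.1 ∩ J)) {x : ℝ} (hxW : x ∈ W.1)
    (hx : x ∈ closure (W.1 ∩ J)) (hxIJ : x ∉ I ∩ J) (q : ↥(W.1 ∩ J)) :
    (f.hom.app (op W) (oneSection k W hIW)).1 q = 0 := by
  set τ := f.hom.app (op W) (oneSection k W hIW)
  by_contra hq
  have hτ : W.1 ∩ J ⊆ sectionSupport τ.1 := fun y hy =>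
    ⟨hy, fun h0 => hq ((τ.2.1.apply_eq_of_isPreconnected_subtype hWJ q ⟨y, hy⟩).trans h0)⟩
  have hxτ : x ∈ sectionSupport τ.1 := τ.2.2 x hxW (closure_mono hτ hx)
  exact hxIJ ⟨(sectionSupport_subset _ (sectionSupport_app_subset f W _ hxτ)).2,
    (sectionSupport_subset _ hxτ).2⟩

theorem hom_eq_zero_of_exists_mem_closure_not_mem (hI : I.OrdConnected) (W : Opens (TopCat.of ℝ))
    (hIW : I ⊆ W.1) (hIcl : W.1 ∩ closure I ⊆ I) (hWJ : IsPreconnected (W.1 ∩ J))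
    (hx : (I ∩ J).Nonempty → ∃ x ∈ W.1, x ∈ closure (W.1 ∩ J) ∧ x ∉ I ∩ J)
    (f : intervalSheaf k I ⟶ intervalSheaf k J) : f = 0 := by
  refine hom_eq_zero_of_app_apply_eq_zero f fun V s ⟨p, hpV, hpJ⟩ => ?_
  by_contra hfp
  have hpI : p ∈ I :=
    (sectionSupport_subset _ (sectionSupport_app_subset f V s ⟨⟨hpV, hpJ⟩, hfp⟩)).2
  obtain ⟨x, hxW, hxcl, hxIJ⟩ := hx ⟨p, hpI, hpJ⟩
  rw [app_apply_eq_smul_app_oneSection hI f hIcl s hpV (hIW hpI) hpI hpJ,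
    app_oneSection_eq_zero f W hIcl hWJ hxW hxcl hxIJ, smul_zero] at hfp
  exact hfp rfl

theorem hom_Ico'_eq_zero_of_forall_le {a : ℝ} {b c : EReal} (hJ : J.OrdConnected)
    (hJc : ∀ p ∈ J, ∀ y : ℝ, y ≤ p → (y ∈ J ↔ c < y))
    (f : intervalSheaf k (Ico' a b) ⟶ intervalSheaf k J) : f = 0 := by
  let W : Opens (TopCat.of ℝ) :=
    ⟨{x | (x : EReal) < b}, isOpen_Iio.preimage continuous_coe_real_ereal⟩
  refine hom_eq_zero_of_exists_mem_closure_not_mem (ordConnected_Ico' a b) W (fun x hx => hx.2)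
    ?_ ?_ ?_ f
  · rintro x ⟨hxW, hxcl⟩
    exact ⟨closure_minimal (fun y (hy : y ∈ Ico' a b) => hy.1) isClosed_Ici hxcl, hxW⟩
  · exact ((ordConnected_Iio.preimage_mono EReal.coe_strictMono.monotone).inter hJ).isPreconnected
  · rintro ⟨p, ⟨hap, hpb⟩, hpJ⟩
    have hcp : c < p := (hJc p hpJ p le_rfl).1 hpJ
    induction c with
    | bot =>
      have ha : a - 1 ≤ p := by linarith
      have hW : ((a - 1 : ℝ) : EReal) < b := (EReal.coe_le_coe_iff.2 ha).trans_lt hpb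
      exact ⟨a - 1, hW, subset_closure ⟨hW, (hJc p hpJ _ ha).2 (EReal.bot_lt_coe _)⟩,
        fun h => by linarith [h.1.1]⟩
    | coe c =>
      have hcp' : c < p := EReal.coe_lt_coe_iff.1 hcp
      have hsub : Ioo c p ⊆ W.1 ∩ J := fun y hy =>
        ⟨(EReal.coe_lt_coe_iff.2 hy.2).trans hpb,
          (hJc p hpJ y hy.2.le).2 (EReal.coe_lt_coe_iff.2 hy.1)⟩
      refine ⟨c, hcp.trans hpb, closure_mono hsub ?_,
        fun h => lt_irrefl _ ((hJc p hpJ c hcp'.le).1 h.2)⟩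
      rw [closure_Ioo hcp'.ne]
      exact left_mem_Icc.2 hcp'.le
    | top => exact absurd hcp not_top_lt

theorem hom_Ioc'_eq_zero_of_forall_ge {a d : EReal} {b : ℝ} (hJ : J.OrdConnected)
    (hJd : ∀ p ∈ J, ∀ y : ℝ, p ≤ y → (y ∈ J ↔ (y : EReal) < d))
    (f : intervalSheaf k (Ioc' a b) ⟶ intervalSheaf k J) : f = 0 := by
  let W : Opens (TopCat.of ℝ) :=
    ⟨{x | a < (x : EReal)}, isOpen_Ioi.preimage continuous_coe_real_ereal⟩
  refine hom_eq_zero_of_exists_mem_closure_not_mem (ordConnected_Ioc' a b) W (fun x hx => hx.1)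
    ?_ ?_ ?_ f
  · rintro x ⟨hxW, hxcl⟩
    exact ⟨hxW, closure_minimal (fun y (hy : y ∈ Ioc' a b) => hy.2) isClosed_Iic hxcl⟩
  · exact ((ordConnected_Ioi.preimage_mono EReal.coe_strictMono.monotone).inter hJ).isPreconnected
  · rintro ⟨p, ⟨hap, hpb⟩, hpJ⟩
    have hpd : (p : EReal) < d := (hJd p hpJ p le_rfl).1 hpJ
    induction d with
    | bot => exact absurd hpd not_lt_bot
    | coe d =>
      have hpd' : p < d := EReal.coe_lt_coe_iff.1 hpd
      have hsub : Ioo p d ⊆ W.1 ∩ J := fun y hy =>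
        ⟨hap.trans (EReal.coe_lt_coe_iff.2 hy.1),
          (hJd p hpJ y hy.1.le).2 (EReal.coe_lt_coe_iff.2 hy.2)⟩
      refine ⟨d, hap.trans hpd, closure_mono hsub ?_,
        fun h => lt_irrefl _ ((hJd p hpJ d hpd'.le).1 h.2)⟩
      rw [closure_Ioo hpd'.ne]
      exact right_mem_Icc.2 hpd'.le
    | top =>
      have hb : p ≤ b + 1 := by linarith
      have hW : a < ((b + 1 : ℝ) : EReal) := hap.trans_le (EReal.coe_le_coe_iff.2 hb)
      exact ⟨b + 1, hW, subset_closure ⟨hW, (hJd p hpJ _ hb).2 (EReal.coe_lt_top _)⟩,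
        fun h => by linarith [h.1.2]⟩

end intervalSheaf

end

/-- There are no nonzero sheaf morphisms from a right half-open interval sheaf
to an open or left half-open interval sheaf, nor from a left half-open interval sheaf to an open
or right half-open interval sheaf. -/
theorem hom_halfopen_vanishing (k : Type) [Field k] :
    (∀ (a : ℝ) (b : EReal), (a : EReal) < b → ∀ (c d : EReal), c < d →
      ∀ f : intervalSheaf k (Ico' a b) ⟶ intervalSheaf k (Ioo' c d), f = 0) ∧
    (∀ (a : ℝ) (b : EReal), (a : EReal) < b → ∀ (c : EReal) (d : ℝ), c < (d : EReal) →
      ∀ f : intervalSheaf k (Ico' a b) ⟶ intervalSheaf k (Ioc' c d), f = 0) ∧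
    (∀ (a : EReal) (b : ℝ), a < (b : EReal) → ∀ (c d : EReal), c < d →
      ∀ f : intervalSheaf k (Ioc' a b) ⟶ intervalSheaf k (Ioo' c d), f = 0) ∧
    (∀ (a : EReal) (b : ℝ), a < (b : EReal) → ∀ (c : ℝ) (d : EReal), (c : EReal) < d →
      ∀ f : intervalSheaf k (Ioc' a b) ⟶ intervalSheaf k (Ico' c d), f = 0) := by
  refine ⟨fun a b _ c d _ f => ?_, fun a b _ c d _ f => ?_, fun a b _ c d _ f => ?_,
    fun a b _ c d _ f => ?_⟩
  · exact intervalSheaf.hom_Ico'_eq_zero_of_forall_le (ordConnected_Ioo' c d)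
      (fun p hp y hy => ⟨And.left, fun hc => ⟨hc, (EReal.coe_le_coe_iff.2 hy).trans_lt hp.2⟩⟩) f
  · exact intervalSheaf.hom_Ico'_eq_zero_of_forall_le (ordConnected_Ioc' c d)
      (fun p hp y hy => ⟨And.left, fun hc => ⟨hc, hy.trans hp.2⟩⟩) f
  · exact intervalSheaf.hom_Ioc'_eq_zero_of_forall_ge (ordConnected_Ioo' c d)
      (fun p hp y hy => ⟨And.right, fun hd => ⟨hp.1.trans_le (EReal.coe_le_coe_iff.2 hy), hd⟩⟩) f
  · exact intervalSheaf.hom_Ioc'_eq_zero_of_forall_ge (ordConnected_Ico' c d)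
      (fun p hp y hy => ⟨And.right, fun hd => ⟨hp.1.trans hy, hd⟩⟩) f

end
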